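/- Let ∼_mem be the relation on initial paths relating ρ and ρ' iff last(ρ) = last(ρ'), treated as the relation of an artificial agent a_mem in an ICGS. Then for any initial path ρ and agent a, a strategy σ satisfies I, [a↦σ], ρ ⊨ AG ⋁_{c∈Act} K_{a_mem} AX p^a_c if and only if σ is memoryless on its outcomes from ρ, i.e., for all finite prefixes ρ', ρ'' where ρ' lies in the outcome tree of [a↦σ] from ρ and last(ρ') = last(ρ''), σ(ρ') = σ(ρ''). -/

import Mathlib

/-- A concurrent game structure: transition function, initial state, valuation. -/
structure CGS (S Ag Act AP : Type) where
  δ : S → (Ag → Act) → S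
  init : S
  val : S → AP → Prop

variable {S Ag Act AP Var : Type}

/-- An initial (finite) path: a start state together with the list of decisions taken. -/
abbrev FPath (S Ag Act : Type) := S × List (Ag → Act)

/-- Last state of an initial path. -/
def CGS.lastState (G : CGS S Ag Act AP) (ρ : FPath S Ag Act) : S :=
  ρ.2.foldl G.δ ρ.1

/-- A strategy assigns an action to every initial path. -/
abbrev Strat (S Ag Act : Type) := FPath S Ag Act → Act

/-- Concatenation of initial paths (meaningful when `G.lastState ρ = ρ'.1`,
i.e. they are glued at the shared state). -/
def FPath.concat (ρ ρ' : FPath S Ag Act) : FPath S Ag Act := (ρ.1, ρ.2 ++ ρ'.2)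

/-- The finite prefix with `n` decisions of the play from `q` whose decision stream is `d`. -/
def prefixPath (q : S) (d : ℕ → Ag → Act) (n : ℕ) : FPath S Ag Act :=
  (q, List.ofFn fun i : Fin n => d i)

/-- The state reached after `i` steps of the play from `q` with decision stream `d`. -/
def stateAt (G : CGS S Ag Act AP) (q : S) (d : ℕ → Ag → Act) (i : ℕ) : S :=
  G.lastState (prefixPath q d i)

/-- An assignment: a partial map from agents and variables to strategies. -/
abbrev Assign (S Ag Act Var : Type) := Ag ⊕ Var → Option (Strat S Ag Act)

/-- The outcome of an assignment from a state: the set of plays (identified with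
their decision streams) compatible with all strategies assigned to agents. -/
def outcome (G : CGS S Ag Act AP) (q : S) (χ : Assign S Ag Act Var) :
    Set (ℕ → Ag → Act) :=
  {d | ∀ (k : ℕ) (a : Ag) (σ : Strat S Ag Act),
      χ (Sum.inl a) = some σ → d k a = σ (prefixPath q d k)}

/-- The `ρ`-translation of a strategy. -/
def transStrat [DecidableEq S] (G : CGS S Ag Act AP) (ρ : FPath S Ag Act)
    (σ : Strat S Ag Act) : Strat S Ag Act :=
  fun ρ' => if ρ'.1 = G.lastState ρ then σ (ρ.concat ρ') else σ ρ'

/-- The `ρ`-translation of an assignment. -/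
def transAssign [DecidableEq S] (G : CGS S Ag Act AP) (ρ : FPath S Ag Act)
    (χ : Assign S Ag Act Var) : Assign S Ag Act Var :=
  fun l => (χ l).map (transStrat G ρ)

/-- An imperfect information CGS: a CGS with an indistinguishability
equivalence relation on initial paths for each agent. -/
structure ICGS (S Ag Act AP : Type) extends CGS S Ag Act AP where
  rel : Ag → FPath S Ag Act → FPath S Ag Act → Prop
  rel_equiv : ∀ a, Equivalence (rel a)

/-- The initial path obtained by extending `ρ` with the first `i` decisions of
the stream `d`. -/
def extFPath (ρ : FPath S Ag Act) (d : ℕ → Ag → Act) (i : ℕ) : FPath S Ag Act :=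
  (ρ.1, ρ.2 ++ List.ofFn fun t : Fin i => d t)

/-- Outcome of an assignment from an initial path: plays extending `ρ` (given
by their decision streams) in which each bound agent follows its strategy,
evaluated on the full history. -/
def outcomeFrom (χ : Assign S Ag Act Var) (ρ : FPath S Ag Act) :
    Set (ℕ → Ag → Act) :=
  {d | ∀ (k : ℕ) (a : Ag) (σ : Strat S Ag Act),
      χ (Sum.inl a) = some σ → d k a = σ (extFPath ρ d k)}

mutual
/-- State formulas of Epistemic Strategy Logic (ESL). `act a c` is the action
proposition `p^a_c` ("agent `a` just played action `c`"), and `know A` is the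
distributed knowledge operator `D_A`. -/
inductive ESLForm (AP Ag Act Var : Type) : Type 1 where
  | fls  : ESLForm AP Ag Act Var
  | atom : AP → ESLForm AP Ag Act Var
  | act  : Ag → Act → ESLForm AP Ag Act Var
  | neg  : ESLForm AP Ag Act Var → ESLForm AP Ag Act Var
  | or   : ESLForm AP Ag Act Var → ESLForm AP Ag Act Var → ESLForm AP Ag Act Var
  | exi  : Var → ESLForm AP Ag Act Var → ESLForm AP Ag Act Var
  | bind : Ag → Var → ESLForm AP Ag Act Var → ESLForm AP Ag Act Var
  | unbind : Ag → ESLForm AP Ag Act Var → ESLForm AP Ag Act Var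
  | pathE : ESLPath AP Ag Act Var → ESLForm AP Ag Act Var
  | know : Set Ag → ESLForm AP Ag Act Var → ESLForm AP Ag Act Var
/-- Path formulas of ESL. -/
inductive ESLPath (AP Ag Act Var : Type) : Type 1 where
  | state : ESLForm AP Ag Act Var → ESLPath AP Ag Act Var
  | neg   : ESLPath AP Ag Act Var → ESLPath AP Ag Act Var
  | or    : ESLPath AP Ag Act Var → ESLPath AP Ag Act Var → ESLPath AP Ag Act Var
  | next  : ESLPath AP Ag Act Var → ESLPath AP Ag Act Var
  | untl  : ESLPath AP Ag Act Var → ESLPath AP Ag Act Var → ESLPath AP Ag Act Var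
end

mutual
/-- Semantics of ESL state formulas, at an initial path under an assignment. -/
def ESLsat [DecidableEq Ag] [DecidableEq Var] (I : ICGS S Ag Act AP)
    (χ : Assign S Ag Act Var) (ρ : FPath S Ag Act) : ESLForm AP Ag Act Var → Prop
  | .fls => False
  | .atom p => I.val (I.toCGS.lastState ρ) p
  | .act a c => ∃ dec, ρ.2.getLast? = some dec ∧ dec a = c
  | .neg φ => ¬ ESLsat I χ ρ φ
  | .or φ φ' => ESLsat I χ ρ φ ∨ ESLsat I χ ρ φ'
  | .exi x φ =>
      ∃ σ : Strat S Ag Act, ESLsat I (Function.update χ (Sum.inr x) (some σ)) ρ φ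
  | .bind a x φ => ESLsat I (Function.update χ (Sum.inl a) (χ (Sum.inr x))) ρ φ
  | .unbind a φ => ESLsat I (Function.update χ (Sum.inl a) none) ρ φ
  | .pathE ψ => ∃ d ∈ outcomeFrom χ ρ, ESLsatP I χ ρ d 0 ψ
  | .know A φ => ∀ ρ' : FPath S Ag Act, (∀ a ∈ A, I.rel a ρ ρ') → ESLsat I χ ρ' φ
/-- Semantics of ESL path formulas, on the play extending `ρ` with decision
stream `d`, at position `i` (relative to the end of `ρ`). -/
def ESLsatP [DecidableEq Ag] [DecidableEq Var] (I : ICGS S Ag Act AP)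
    (χ : Assign S Ag Act Var) (ρ : FPath S Ag Act) (d : ℕ → Ag → Act) (i : ℕ) :
    ESLPath AP Ag Act Var → Prop
  | .state φ => ESLsat I χ (extFPath ρ d i) φ
  | .neg ψ => ¬ ESLsatP I χ ρ d i ψ
  | .or ψ ψ' => ESLsatP I χ ρ d i ψ ∨ ESLsatP I χ ρ d i ψ'
  | .next ψ => ESLsatP I χ ρ d (i + 1) ψ
  | .untl ψ ψ' => ∃ j, i ≤ j ∧ ESLsatP I χ ρ d j ψ' ∧
      ∀ k, i ≤ k → k < j → ESLsatP I χ ρ d k ψ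
end

/-- `A X φ`, i.e. `¬ E X ¬φ`. -/
def AXf (φ : ESLForm AP Ag Act Var) : ESLForm AP Ag Act Var :=
  .neg (.pathE (.next (.state (.neg φ))))

/-- `A G φ`, i.e. `¬ E (⊤ U ¬φ)`. -/
def AGf (φ : ESLForm AP Ag Act Var) : ESLForm AP Ag Act Var :=
  .neg (.pathE (.untl (.state (.neg .fls)) (.state (.neg φ))))

/-- Individual knowledge: `K_a φ = D_{\{a\}} φ`. -/
def Kf (a : Ag) (φ : ESLForm AP Ag Act Var) : ESLForm AP Ag Act Var :=
  .know {a} φ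

/-- `AG ⋁_{c ∈ Act} K_{ak} AX p^{aa}_c`. -/
noncomputable def wUnifAux2 [Fintype Act] (ak aa : Ag) : ESLForm AP Ag Act Var :=
  AGf ((Finset.univ.toList.map fun c : Act => Kf ak (AXf (.act aa c))).foldr .or .fls)

/-- The formula `AG ⋁_{c ∈ Act} K_a AX p^a_c` characterizing weak uniformity. -/
noncomputable def wUnifAux [Fintype Act] (a : Ag) : ESLForm AP Ag Act Var :=
  wUnifAux2 a a

/-- The assignment binding only agent `a`, to strategy `σ`. -/
def singleA [DecidableEq Ag] (a : Ag) (σ : Strat S Ag Act) : Assign S Ag Act Var :=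
  fun l => match l with
    | Sum.inl b => if b = a then some σ else none
    | Sum.inr _ => none

/-- `σ` is weakly uniform for `a` in `ρ`: on every finite prefix `ρ'`
(extending `ρ`) of an outcome of `[a ↦ σ]` from `ρ`, and every initial path
`ρ''` indistinguishable from `ρ'` for `a`, `σ(ρ') = σ(ρ'')`. -/
def weaklyUniform [DecidableEq Ag] (I : ICGS S Ag Act AP) (a : Ag)
    (σ : Strat S Ag Act) (ρ : FPath S Ag Act) : Prop :=
  ∀ d ∈ outcomeFrom (singleA a σ : Assign S Ag Act PUnit) ρ,
    ∀ (i : ℕ) (ρ'' : FPath S Ag Act),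
      I.rel a (extFPath ρ d i) ρ'' → σ (extFPath ρ d i) = σ ρ''


/-! Under `[a ↦ σ]` the formula `AX p^a_c` holds at `ρ'` exactly when `σ ρ' = c`: every outcome
from `ρ'` starts with `a` playing `σ ρ'`, and there is at least one outcome. Hence
`K_{a_mem} AX p^a_c` says that `σ` takes the value `c` on the whole `∼_mem`-class of `ρ'`, the
disjunction over `c` says that `σ` is constant on that class, and `AG` lets `ρ'` range over the
prefixes of the outcomes from `ρ`. -/

section Play

def playList (f : FPath S Ag Act → Ag → Act) (ρ : FPath S Ag Act) : ℕ → List (Ag → Act)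
  | 0 => []
  | n + 1 => playList f ρ n ++ [f (ρ.1, ρ.2 ++ playList f ρ n)]

def play (f : FPath S Ag Act → Ag → Act) (ρ : FPath S Ag Act) (k : ℕ) : Ag → Act :=
  f (ρ.1, ρ.2 ++ playList f ρ k)

lemma ofFn_play (f : FPath S Ag Act → Ag → Act) (ρ : FPath S Ag Act) (k : ℕ) :
    List.ofFn (fun t : Fin k => play f ρ t) = playList f ρ k := by
  induction k with
  | zero => rfl
  | succ n ih =>
    rw [List.ofFn_succ', List.concat_eq_append]
    simp only [Fin.val_castSucc, Fin.val_last, ih, playList]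
    rfl

lemma play_eq_apply_extFPath (f : FPath S Ag Act → Ag → Act) (ρ : FPath S Ag Act) (k : ℕ) :
    play f ρ k = f (extFPath ρ (play f ρ) k) := by
  rw [extFPath, ofFn_play]; rfl

end Play

section Semantics

variable [DecidableEq Ag]

lemma mem_outcomeFrom_singleA_iff (a : Ag) (σ : Strat S Ag Act) (ρ : FPath S Ag Act)
    (d : ℕ → Ag → Act) :
    d ∈ outcomeFrom (singleA a σ : Assign S Ag Act Var) ρ ↔
      ∀ k, d k a = σ (extFPath ρ d k) := by
  simp [outcomeFrom, singleA]

lemma outcomeFrom_singleA_nonempty (a : Ag) (σ : Strat S Ag Act) (ρ : FPath S Ag Act) :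
    (outcomeFrom (singleA a σ : Assign S Ag Act Var) ρ).Nonempty :=
  ⟨play (fun h _ => σ h) ρ, (mem_outcomeFrom_singleA_iff a σ ρ _).2 fun k =>
    congrFun (play_eq_apply_extFPath _ ρ k) a⟩

variable [DecidableEq Var]

lemma ESLsat_act_extFPath_one (I : ICGS S Ag Act AP) (χ : Assign S Ag Act Var)
    (ρ : FPath S Ag Act) (d : ℕ → Ag → Act) (a : Ag) (c : Act) :
    ESLsat I χ (extFPath ρ d 1) (.act a c) ↔ d 0 a = c := by
  simp [ESLsat, extFPath]

lemma ESLsat_AXf (I : ICGS S Ag Act AP) (χ : Assign S Ag Act Var) (ρ : FPath S Ag Act)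
    (φ : ESLForm AP Ag Act Var) :
    ESLsat I χ ρ (AXf φ) ↔ ∀ d ∈ outcomeFrom χ ρ, ESLsat I χ (extFPath ρ d 1) φ := by
  simp [AXf, ESLsat, ESLsatP]

lemma ESLsat_AGf (I : ICGS S Ag Act AP) (χ : Assign S Ag Act Var) (ρ : FPath S Ag Act)
    (φ : ESLForm AP Ag Act Var) :
    ESLsat I χ ρ (AGf φ) ↔ ∀ d ∈ outcomeFrom χ ρ, ∀ j, ESLsat I χ (extFPath ρ d j) φ := by
  simp [AGf, ESLsat, ESLsatP]

lemma ESLsat_Kf (I : ICGS S Ag Act AP) (χ : Assign S Ag Act Var) (ρ : FPath S Ag Act)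
    (a : Ag) (φ : ESLForm AP Ag Act Var) :
    ESLsat I χ ρ (Kf a φ) ↔ ∀ ρ', I.rel a ρ ρ' → ESLsat I χ ρ' φ := by
  simp [Kf, ESLsat]

lemma ESLsat_foldr_or (I : ICGS S Ag Act AP) (χ : Assign S Ag Act Var) (ρ : FPath S Ag Act)
    (f : Act → ESLForm AP Ag Act Var) (l : List Act) :
    ESLsat I χ ρ ((l.map f).foldr .or .fls) ↔ ∃ c ∈ l, ESLsat I χ ρ (f c) := by
  induction l with
  | nil => simp [ESLsat]
  | cons c l ih => simp [ESLsat, ih]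

lemma ESLsat_singleA_AXf_act (I : ICGS S Ag Act AP) (a : Ag) (σ : Strat S Ag Act)
    (ρ : FPath S Ag Act) (c : Act) :
    ESLsat I (singleA a σ : Assign S Ag Act Var) ρ (AXf (.act a c)) ↔ σ ρ = c := by
  have first_move : ∀ d ∈ outcomeFrom (singleA a σ : Assign S Ag Act Var) ρ, d 0 a = σ ρ :=
    fun d hd => ((mem_outcomeFrom_singleA_iff a σ ρ d).1 hd 0).trans (by simp [extFPath])
  simp only [ESLsat_AXf, ESLsat_act_extFPath_one]
  obtain ⟨d₀, hd₀⟩ := outcomeFrom_singleA_nonempty (Var := Var) a σ ρ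
  exact ⟨fun h => (first_move d₀ hd₀).symm.trans (h d₀ hd₀),
    fun h d hd => (first_move d hd).trans h⟩

end Semantics

/-- if `a_mem` is an (artificial) agent whose indistinguishability
relation `∼_mem` relates exactly the initial paths with the same last state,
then `I, [a ↦ σ], ρ ⊨ AG ⋁_{c ∈ Act} K_{a_mem} AX p^a_c` iff `σ` is memoryless
on its outcomes from `ρ`: for every finite prefix `ρ'` of the outcome tree of
`[a ↦ σ]` from `ρ` and every initial path `ρ''` with `last(ρ') = last(ρ'')`,
`σ(ρ') = σ(ρ'')`. -/
theorem statement_18 [DecidableEq Ag] [DecidableEq Var] [Fintype Act] [Nonempty Act]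
    (I : ICGS S Ag Act AP) (amem : Ag)
    (hmem : ∀ ρ ρ' : FPath S Ag Act,
      I.rel amem ρ ρ' ↔ I.toCGS.lastState ρ = I.toCGS.lastState ρ')
    (ρ : FPath S Ag Act) (a : Ag) (σ : Strat S Ag Act) :
    ESLsat I (singleA a σ : Assign S Ag Act Var) ρ (wUnifAux2 amem a) ↔
      ∀ d ∈ outcomeFrom (singleA a σ : Assign S Ag Act PUnit) ρ,
        ∀ (i : ℕ) (ρ'' : FPath S Ag Act),
          I.toCGS.lastState (extFPath ρ d i) = I.toCGS.lastState ρ'' →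
            σ (extFPath ρ d i) = σ ρ'' := by
  have outcomes_eq : outcomeFrom (singleA a σ : Assign S Ag Act Var) ρ =
      outcomeFrom (singleA a σ : Assign S Ag Act PUnit) ρ := by
    ext d; simp only [mem_outcomeFrom_singleA_iff]
  simp only [wUnifAux2, ESLsat_AGf, ESLsat_foldr_or, ESLsat_Kf, ESLsat_singleA_AXf_act, hmem,
    Finset.mem_toList, Finset.mem_univ, true_and, outcomes_eq]
  refine forall₂_congr fun d _ => forall_congr' fun i => ?_
  exact ⟨fun ⟨c, hc⟩ ρ'' h => (hc _ rfl).trans (hc ρ'' h).symm,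
    fun h => ⟨_, fun ρ'' h' => (h ρ'' h').symm⟩⟩
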